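/- Let d ≥ 1, t > 0, σ ≥ 0, and let h : ℝ^d → ℝ be a measurable function with |h(y)| ≤ σ for all y ∈ ℝ^d. Then for every x ∈ ℝ^d the vector v := E_e[h(x + t·e)·e], where e is uniformly distributed on the unit sphere S^{d−1} = {y ∈ ℝ^d : ‖y‖ = 1}, satisfies ‖v‖² ≤ σ²/d. -/

import Mathlib

open MeasureTheory

/-- The uniform (rotation-invariant) probability measure on the unit sphere of `ℝ^d`,
viewed as a measure on `ℝ^d` (normalization of the spherical measure `volume.toSphere`). -/
noncomputable def sphereUniform (d : ℕ) : Measure (EuclideanSpace ℝ (Fin d)) :=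
  Measure.map Subtype.val
    (((volume : Measure (EuclideanSpace ℝ (Fin d))).toSphere Set.univ)⁻¹ •
      (volume : Measure (EuclideanSpace ℝ (Fin d))).toSphere)

/-!
Write `v` for the vector in question. Pairing with `v` gives `‖v‖² = E[h(x + t e) ⟪v, e⟫]`, so
Jensen's inequality and `|h| ≤ σ` give `‖v‖⁴ ≤ σ² E[⟪v, e⟫²]`. Since reflections carry any vector to
any other of the same norm, rotation invariance makes `E[⟪v, e⟫²]` a function of `‖v‖` alone, and
summing over an orthonormal basis gives `d E[⟪v, e⟫²] = ‖v‖² E[‖e‖²] = ‖v‖²`. Hence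
`‖v‖⁴ ≤ σ² ‖v‖² / d`.
-/

open Metric
open scoped RealInnerProductSpace Pointwise

theorem sq_integral_le_integral_sq {Ω : Type*} [MeasurableSpace Ω] {μ : Measure Ω}
    [IsProbabilityMeasure μ] {X : Ω → ℝ} (hX : MemLp X 2 μ) :
    (∫ ω, X ω ∂μ) ^ 2 ≤ ∫ ω, X ω ^ 2 ∂μ := by
  have hvar := ProbabilityTheory.variance_eq_sub hX
  simp only [Pi.pow_apply] at hvar
  linarith [ProbabilityTheory.variance_nonneg X μ]

theorem LinearIsometryEquiv.preimage_set_smul {E : Type*} [NormedAddCommGroup E]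
    [NormedSpace ℝ E] (f : E ≃ₗᵢ[ℝ] E) (T : Set ℝ) (A : Set E) :
    f ⁻¹' (T • A) = T • f ⁻¹' A := by
  ext x
  simp only [Set.mem_smul, Set.mem_preimage]
  constructor
  · rintro ⟨r, hr, a, ha, hx⟩
    exact ⟨r, hr, f.symm a, by simpa using ha, f.injective (by simp [hx])⟩
  · rintro ⟨r, hr, a, ha, rfl⟩
    exact ⟨r, hr, f a, ha, (f.map_smul r a).symm⟩

section Sphere

variable {E : Type*} [NormedAddCommGroup E] [InnerProductSpace ℝ E] [MeasurableSpace E]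
  [BorelSpace E] {μ : Measure E}

theorem MeasureTheory.Measure.map_linearIsometryEquiv_map_val_toSphere (f : E ≃ₗᵢ[ℝ] E)
    (hf : MeasurePreserving f μ μ) :
    (μ.toSphere.map (↑)).map f = μ.toSphere.map ((↑) : sphere (0 : E) 1 → E) := by
  ext s hs
  have hfs : MeasurableSet (f ⁻¹' s) := f.continuous.measurable hs
  rw [Measure.map_apply f.continuous.measurable hs,
    Measure.map_apply measurable_subtype_coe hfs, Measure.map_apply measurable_subtype_coe hs,
    μ.toSphere_apply' (measurable_subtype_coe hfs), μ.toSphere_apply' (measurable_subtype_coe hs),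
    Subtype.image_preimage_coe, Subtype.image_preimage_coe]
  have hsphere : sphere (0 : E) 1 = f ⁻¹' sphere 0 1 := by simp
  rw [hsphere, ← Set.preimage_inter, ← f.preimage_set_smul,
    hf.measure_preimage_emb f.toHomeomorph.measurableEmbedding, ← hsphere]

theorem integrable_inner_sq_of_ae_norm_eq_one [IsFiniteMeasure μ] (hμ : ∀ᵐ e ∂μ, ‖e‖ = 1)
    (v : E) : Integrable (fun e ↦ ⟪v, e⟫ ^ 2) μ := by
  refine Integrable.mono' (integrable_const (‖v‖ ^ 2)) (by fun_prop) ?_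
  filter_upwards [hμ] with e he
  simpa [he] using pow_le_pow_left₀ (abs_nonneg _) (abs_real_inner_le_norm v e) 2

theorem integral_inner_sq_eq_of_norm_eq (hμ : ∀ f : E ≃ₗᵢ[ℝ] E, μ.map f = μ) {u w : E}
    (h : ‖u‖ = ‖w‖) : ∫ e, ⟪u, e⟫ ^ 2 ∂μ = ∫ e, ⟪w, e⟫ ^ 2 ∂μ := by
  set R := Submodule.reflection (ℝ ∙ (u - w))ᗮ
  have hRu : R u = w := Submodule.reflection_sub h
  calc ∫ e, ⟪u, e⟫ ^ 2 ∂μ = ∫ e, ⟪w, R e⟫ ^ 2 ∂μ := by simp_rw [← hRu, R.inner_map_map]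
    _ = ∫ e, ⟪w, e⟫ ^ 2 ∂(μ.map R) := (integral_map R.continuous.aemeasurable
        (by fun_prop : Continuous fun e : E ↦ ⟪w, e⟫ ^ 2).aestronglyMeasurable).symm
    _ = ∫ e, ⟪w, e⟫ ^ 2 ∂μ := by rw [hμ]

theorem finrank_mul_integral_inner_sq [FiniteDimensional ℝ E] [IsProbabilityMeasure μ]
    (hμ : ∀ f : E ≃ₗᵢ[ℝ] E, μ.map f = μ) (hsphere : ∀ᵐ e ∂μ, ‖e‖ = 1) (v : E) :
    Module.finrank ℝ E * ∫ e, ⟪v, e⟫ ^ 2 ∂μ = ‖v‖ ^ 2 := by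
  set b := stdOrthonormalBasis ℝ E
  have hb : ∀ i, ∫ e, ⟪‖v‖ • b i, e⟫ ^ 2 ∂μ = ∫ e, ⟪v, e⟫ ^ 2 ∂μ := fun i ↦
    integral_inner_sq_eq_of_norm_eq hμ (by simp [norm_smul, b.orthonormal.1 i])
  calc Module.finrank ℝ E * ∫ e, ⟪v, e⟫ ^ 2 ∂μ = ∑ i, ∫ e, ⟪‖v‖ • b i, e⟫ ^ 2 ∂μ := by
        simp only [hb, Finset.sum_const, Finset.card_univ, Fintype.card_fin, nsmul_eq_mul]
    _ = ∫ e, ∑ i, ⟪‖v‖ • b i, e⟫ ^ 2 ∂μ :=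
        (integral_finsetSum _ fun i _ ↦ integrable_inner_sq_of_ae_norm_eq_one hsphere _).symm
    _ = ∫ _, ‖v‖ ^ 2 ∂μ := integral_congr_ae <| hsphere.mono fun e he ↦ by
        simp [real_inner_smul_left, mul_pow, ← Finset.mul_sum, b.sum_sq_inner_right, he]
    _ = ‖v‖ ^ 2 := by simp

theorem inner_integral_smul_sq_le [FiniteDimensional ℝ E] [IsProbabilityMeasure μ]
    (hsphere : ∀ᵐ e ∂μ, ‖e‖ = 1) {g : E → ℝ} {σ : ℝ} (hg : AEStronglyMeasurable g μ)
    (hgσ : ∀ᵐ e ∂μ, |g e| ≤ σ) (w : E) :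
    ⟪w, ∫ e, g e • e ∂μ⟫ ^ 2 ≤ σ ^ 2 * ∫ e, ⟪w, e⟫ ^ 2 ∂μ := by
  have hint : Integrable (fun e ↦ g e • e) μ := by
    refine Integrable.mono' (integrable_const σ) (hg.smul aestronglyMeasurable_id) ?_
    filter_upwards [hsphere, hgσ] with e he hge
    rwa [norm_smul, he, mul_one, Real.norm_eq_abs]
  have hle : ∀ᵐ e ∂μ, ⟪w, g e • e⟫ ^ 2 ≤ σ ^ 2 * ⟪w, e⟫ ^ 2 := hgσ.mono fun e he ↦ by
    rw [real_inner_smul_right, mul_pow]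
    exact mul_le_mul_of_nonneg_right (sq_le_sq.2 (he.trans (le_abs_self σ))) (sq_nonneg _)
  have hmem : MemLp (fun e ↦ ⟪w, g e • e⟫) 2 μ := by
    refine (memLp_two_iff_integrable_sq (hint.const_inner w).1).2 ?_
    refine Integrable.mono' ((integrable_inner_sq_of_ae_norm_eq_one hsphere w).const_mul (σ ^ 2))
      ((hint.const_inner w).1.pow 2) ?_
    filter_upwards [hle] with e he
    rwa [Real.norm_of_nonneg (sq_nonneg _)]
  calc ⟪w, ∫ e, g e • e ∂μ⟫ ^ 2 = (∫ e, ⟪w, g e • e⟫ ∂μ) ^ 2 := by rw [integral_inner hint]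
    _ ≤ ∫ e, ⟪w, g e • e⟫ ^ 2 ∂μ := sq_integral_le_integral_sq hmem
    _ ≤ ∫ e, σ ^ 2 * ⟪w, e⟫ ^ 2 ∂μ := integral_mono_ae hmem.integrable_sq
        ((integrable_inner_sq_of_ae_norm_eq_one hsphere w).const_mul _) hle
    _ = σ ^ 2 * ∫ e, ⟪w, e⟫ ^ 2 ∂μ := integral_const_mul _ _

theorem finrank_mul_norm_integral_smul_sq_le [FiniteDimensional ℝ E] [IsProbabilityMeasure μ]
    (hμ : ∀ f : E ≃ₗᵢ[ℝ] E, μ.map f = μ) (hsphere : ∀ᵐ e ∂μ, ‖e‖ = 1) {g : E → ℝ} {σ : ℝ}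
    (hg : AEStronglyMeasurable g μ) (hgσ : ∀ᵐ e ∂μ, |g e| ≤ σ) :
    Module.finrank ℝ E * ‖∫ e, g e • e ∂μ‖ ^ 2 ≤ σ ^ 2 := by
  set v := ∫ e, g e • e ∂μ
  have hmoment := finrank_mul_integral_inner_sq hμ hsphere v
  have hle := inner_integral_smul_sq_le hsphere hg hgσ v
  rw [real_inner_self_eq_norm_sq] at hle
  have key : ‖v‖ ^ 2 * (Module.finrank ℝ E * ‖v‖ ^ 2) ≤ ‖v‖ ^ 2 * σ ^ 2 :=
    calc ‖v‖ ^ 2 * (Module.finrank ℝ E * ‖v‖ ^ 2) = Module.finrank ℝ E * (‖v‖ ^ 2) ^ 2 := by ring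
      _ ≤ Module.finrank ℝ E * (σ ^ 2 * ∫ e, ⟪v, e⟫ ^ 2 ∂μ) := by gcongr
      _ = ‖v‖ ^ 2 * σ ^ 2 := by rw [← hmoment]; ring
  rcases (sq_nonneg ‖v‖).eq_or_lt with hv | hv
  · rw [← hv, mul_zero]
    positivity
  · exact le_of_mul_le_mul_left key hv

end Sphere

section sphereUniform

variable {d : ℕ}

theorem map_linearIsometryEquiv_sphereUniform
    (f : EuclideanSpace ℝ (Fin d) ≃ₗᵢ[ℝ] EuclideanSpace ℝ (Fin d)) :
    (sphereUniform d).map f = sphereUniform d := by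
  rw [sphereUniform, Measure.map_smul, Measure.map_smul,
    Measure.map_linearIsometryEquiv_map_val_toSphere f f.measurePreserving]

theorem isProbabilityMeasure_sphereUniform (hd : 0 < d) :
    IsProbabilityMeasure (sphereUniform d) := by
  have : NeZero d := ⟨hd.ne'⟩
  have : NeZero (volume : Measure (EuclideanSpace ℝ (Fin d))).toSphere :=
    ⟨Measure.toSphere_ne_zero _⟩
  exact Measure.isProbabilityMeasure_map measurable_subtype_coe.aemeasurable

theorem ae_norm_eq_one_sphereUniform : ∀ᵐ e ∂(sphereUniform d), ‖e‖ = 1 := by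
  rw [sphereUniform, ae_map_iff measurable_subtype_coe.aemeasurable
    (measurableSet_eq_fun continuous_norm.measurable measurable_const)]
  exact .of_forall fun e ↦ mem_sphere_zero_iff_norm.1 e.2

end sphereUniform

theorem norm_sq_smoothed_noise_le_general {d : ℕ} (hd : 1 ≤ d) (t σ : ℝ)
    (h : EuclideanSpace ℝ (Fin d) → ℝ) (hmeas : Measurable h)
    (hbound : ∀ y : EuclideanSpace ℝ (Fin d), |h y| ≤ σ)
    (x : EuclideanSpace ℝ (Fin d)) :
    ‖∫ e, h (x + t • e) • e ∂(sphereUniform d)‖ ^ 2 ≤ σ ^ 2 / d := by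
  have := isProbabilityMeasure_sphereUniform hd
  have hnorm := finrank_mul_norm_integral_smul_sq_le map_linearIsometryEquiv_sphereUniform
    ae_norm_eq_one_sphereUniform
    (by fun_prop : Measurable fun e ↦ h (x + t • e)).aestronglyMeasurable
    (.of_forall fun e ↦ hbound (x + t • e))
  rw [finrank_euclideanSpace_fin] at hnorm
  rwa [le_div_iff₀ (Nat.cast_pos.2 hd), mul_comm]

theorem norm_sq_smoothed_noise_le {d : ℕ} (hd : 1 ≤ d) (t σ : ℝ) (ht : 0 < t) (hσ : 0 ≤ σ)
    (h : EuclideanSpace ℝ (Fin d) → ℝ) (hmeas : Measurable h)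
    (hbound : ∀ y : EuclideanSpace ℝ (Fin d), |h y| ≤ σ)
    (x : EuclideanSpace ℝ (Fin d)) :
    ‖∫ e, h (x + t • e) • e ∂(sphereUniform d)‖ ^ 2 ≤ σ ^ 2 / d :=
  norm_sq_smoothed_noise_le_general hd t σ h hmeas hbound x
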